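/- arXiv:math/0310310 — 3 statements merged into one kernel-verified Lean document; each statement's English description precedes it below -/
import Mathlib

section
/- The composition product ∘ on 𝒯 is associative. Moreover, for every nonempty finite subset S of ℕ, the k-submodule 𝒯_S of 𝒯 spanned by the basis elements 1_w with w an ordered partition of S is closed under ∘, and (𝒯_S, ∘) is an associative unital k-algebra with unit 1_{(S)} (the Solomon–Tits algebra of S). -/
/-!
Twisted descent algebras and the Solomon-Tits algebra (Patras-Schocker).

* A *packed sequence* is a finite sequence of pairwise disjoint nonempty
  finite subsets of ℕ.
* `TD k` is the free twisted descent algebra `𝒯`: the free `k`-module with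
  basis `1_w`, `w` a packed sequence.
* `convL` is the convolution product `∗`, `compL` the composition product `∘`,
  `deltaL` the coproduct `δ`.
* `TD k` also realizes the free twisted bialgebra `ℬ` (whose basis words
  `α_{S_1}⋯α_{S_k}` are exactly the packed sequences); `Tmap u` realizes the
  convolution `1_{U_1} ∗ ⋯ ∗ 1_{U_l}` of characteristic maps as an
  endomorphism of `ℬ`; `BS k S` is the graded piece `ℬ_S` with concatenation
  `mulInto` and deconcatenation `deltaInto`.
-/

open scoped TensorProduct

noncomputable section
namespace TwistedDescent

/-- A sequence of finite subsets of `ℕ`. -/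
abbrev PSeq : Type := List (Finset ℕ)

/-- A packed sequence: a finite sequence of pairwise disjoint nonempty finite
subsets of `ℕ`. -/
def Packed (w : PSeq) : Prop :=
  w.Pairwise (fun S T => Disjoint S T) ∧ ∀ S ∈ w, S ≠ ∅

instance : DecidablePred Packed := fun w => by unfold Packed; infer_instance

/-- The type of packed sequences. -/
abbrev PackedSeq : Type := {w : PSeq // Packed w}

/-- The free twisted descent algebra `𝒯`: the free `k`-module with basis the
packed sequences.  (The same module realizes the free twisted bialgebra `ℬ`,
whose basis words are the packed sequences.) -/
abbrev TD (k : Type) [CommRing k] : Type := PackedSeq →₀ k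

variable (k : Type) [CommRing k]

/-- The basis element `1_l` of `𝒯` if `l` is packed, and `0` otherwise. -/
def mk (l : PSeq) : TD k := if h : Packed l then Finsupp.single ⟨l, h⟩ 1 else 0

/-- The union `S_1 ∪ ⋯ ∪ S_k` of the members of a sequence of sets. -/
def unionOf (w : PSeq) : Finset ℕ := w.foldr (· ∪ ·) ∅

/-- The convolution product `∗` on `𝒯`, as a bilinear map:
`1_{(S_1,…,S_n)} ∗ 1_{(T_1,…,T_m)} = 1_{(S_1,…,S_n,T_1,…,T_m)}` if all the sets
are pairwise disjoint, and `0` otherwise. -/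
def convL : TD k →ₗ[k] TD k →ₗ[k] TD k :=
  Finsupp.lsum k fun w => LinearMap.toSpanSingleton k _ <|
    Finsupp.lsum k fun v => LinearMap.toSpanSingleton k _ (mk k (w.1 ++ v.1))

/-- The refinement `(S_1∩T_1,…,S_1∩T_k,…,S_n∩T_1,…,S_n∩T_k)` of two sequences,
with all empty intersections deleted. -/
def refines (w v : PSeq) : PSeq :=
  w.flatMap fun S => (v.map fun U => S ∩ U).filter fun U => U ≠ ∅

/-- The composition product on basis elements: `0` if the underlying sets
differ, and the refinement otherwise. -/
def compB (w v : PSeq) : TD k :=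
  if unionOf w = unionOf v then mk k (refines w v) else 0

/-- The composition product `∘` on `𝒯`, as a bilinear map. -/
def compL : TD k →ₗ[k] TD k →ₗ[k] TD k :=
  Finsupp.lsum k fun w => LinearMap.toSpanSingleton k _ <|
    Finsupp.lsum k fun v => LinearMap.toSpanSingleton k _ (compB k w.1 v.1)

instance : Zero (TD k ⊗[k] TD k) :=
  (inferInstance : AddZeroClass (TD k ⊗[k] TD k)).toZero

/-- All ways of splitting each block `S_i` of `w` into an ordered pair
`(T_i, U_i)` with `S_i = T_i ⊔ U_i`. -/
def splittings (w : PSeq) : List (List (Finset ℕ × Finset ℕ)) :=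
  (w.map fun S => S.powerset.toList.map fun U => (U, S \ U)).sections

/-- Delete all empty sets from a sequence. -/
def strip (l : PSeq) : PSeq := l.filter fun S => S ≠ ∅

/-- The coproduct on a basis element:
`δ(1_{(S_1,…,S_k)}) = Σ 1_{(T_1,…,T_k)^} ⊗ 1_{(U_1,…,U_k)^}` summed over all
ways of writing `S_i = T_i ⊔ U_i`, where `^` deletes empty sets. -/
def deltaB (w : PackedSeq) : TD k ⊗[k] TD k :=
  ((splittings w.1).map fun p =>
    (mk k (strip (p.map Prod.fst)) ⊗ₜ[k] mk k (strip (p.map Prod.snd)) :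
      TD k ⊗[k] TD k)).sum

/-- The coproduct `δ : 𝒯 → 𝒯 ⊗ 𝒯`. -/
def deltaL : TD k →ₗ[k] TD k ⊗[k] TD k :=
  Finsupp.lsum k fun w => LinearMap.toSpanSingleton k _ (deltaB k w)

/-- The componentwise convolution `∗₂` on `𝒯 ⊗ 𝒯`:
`(a⊗b) ∗₂ (c⊗d) = (a∗c)⊗(b∗d)`. -/
def conv2 : TD k ⊗[k] TD k →ₗ[k] TD k ⊗[k] TD k →ₗ[k] TD k ⊗[k] TD k :=
  (TensorProduct.homTensorHomMap (RingHom.id k) _ _ _ _).comp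
    (TensorProduct.map (convL k) (convL k))

/-- The componentwise composition `∘₂` on `𝒯 ⊗ 𝒯`:
`(a⊗b) ∘₂ (c⊗d) = (a∘c)⊗(b∘d)`. -/
def comp2 : TD k ⊗[k] TD k →ₗ[k] TD k ⊗[k] TD k →ₗ[k] TD k ⊗[k] TD k :=
  (TensorProduct.homTensorHomMap (RingHom.id k) _ _ _ _).comp
    (TensorProduct.map (compL k) (compL k))

/-- The linear map `μ : 𝒯 ⊗ 𝒯 → 𝒯` induced by the convolution product. -/
def muL : TD k ⊗[k] TD k →ₗ[k] TD k := TensorProduct.lift (convL k)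

/-- The submodule `𝒯_S` of `𝒯` spanned by the basis elements `1_w` with `w` an
ordered partition of `S`. -/
def TS (S : Finset ℕ) : Submodule k (TD k) :=
  Submodule.span k {x | ∃ w : PackedSeq, unionOf w.1 = S ∧ x = Finsupp.single w 1}

/-- The blocks of `w` contained in `U_1`, in their original relative order,
then those contained in `U_2`, and so on. -/
def reorder (u w : PSeq) : PSeq := u.flatMap fun U => w.filter fun S => S ⊆ U

/-- Action of `T_u = 1_{U_1} ∗ ⋯ ∗ 1_{U_l}` on a basis word of `ℬ`: the word is
killed unless it has degree `∪ U_j` and each of its blocks is contained in some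
`U_j`, in which case the blocks are regrouped along `u`. -/
def TmapB (u : PSeq) (w : PackedSeq) : TD k :=
  if unionOf w.1 = unionOf u ∧ ∀ S ∈ w.1, ∃ U ∈ u, S ⊆ U then mk k (reorder u w.1)
  else 0

/-- The endomorphism `T_u = 1_{U_1} ∗ ⋯ ∗ 1_{U_l}` of the free twisted
bialgebra `ℬ`. -/
def Tmap (u : PSeq) : Module.End k (TD k) :=
  Finsupp.lsum k fun w => LinearMap.toSpanSingleton k _ (TmapB k u w)

/-- Ordered partitions of the finite set `S`. -/
def OrdPart (S : Finset ℕ) : Type := {w : PSeq // Packed w ∧ unionOf w = S}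

/-- The graded component `ℬ_S`: the free `k`-module on the ordered partitions
of `S`. -/
abbrev BS (S : Finset ℕ) : Type := OrdPart S →₀ k

/-- Basis element of `ℬ_S`, or `0` if `l` is not an ordered partition of `S`. -/
def mkS (S : Finset ℕ) (l : PSeq) : BS k S :=
  if h : Packed l ∧ unionOf l = S then Finsupp.single ⟨l, h⟩ 1 else 0

instance (S S' : Finset ℕ) : Zero (BS k S ⊗[k] BS k S') :=
  (inferInstance : AddZeroClass (BS k S ⊗[k] BS k S')).toZero

/-- Concatenation `m_{U,V} : ℬ_U ⊗ ℬ_V → ℬ_S` (nonzero only when `U ⊔ V = S`),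
as a bilinear map. -/
def mulInto (U V S : Finset ℕ) : BS k U →ₗ[k] BS k V →ₗ[k] BS k S :=
  Finsupp.lsum k fun w => LinearMap.toSpanSingleton k _ <|
    Finsupp.lsum k fun v => LinearMap.toSpanSingleton k _ (mkS k S (w.1 ++ v.1))

/-- Deconcatenation `δ_{U,V} : ℬ_S → ℬ_U ⊗ ℬ_V` (intended for `S = U ⊔ V`):
a basis word goes to `w_U ⊗ w_V` if each of its blocks is contained in `U` or
in `V`, where `w_U` (resp. `w_V`) is the subsequence of blocks contained in `U`
(resp. `V`), and to `0` otherwise. -/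
def deltaInto (S U V : Finset ℕ) : BS k S →ₗ[k] BS k U ⊗[k] BS k V :=
  Finsupp.lsum k fun w => LinearMap.toSpanSingleton k _ <|
    if ∀ B ∈ w.1, B ⊆ U ∨ B ⊆ V then
      mkS k U (w.1.filter fun B => B ⊆ U) ⊗ₜ[k] mkS k V (w.1.filter fun B => B ⊆ V)
    else 0

/-- Graded endomorphisms of `ℬ`: families `(f_S)_S` of endomorphisms of the
graded components `ℬ_S`. -/
abbrev GEnd : Type := (S : Finset ℕ) → Module.End k (BS k S)

/-- The convolution of graded endomorphisms:
`(f∗g)_S = Σ_{U ⊔ V = S} m_{U,V} ∘ (f_U ⊗ g_V) ∘ δ_{U,V}`. -/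
def gconv (f g : GEnd k) : GEnd k := fun S =>
  ∑ U ∈ S.powerset,
    (TensorProduct.lift (mulInto k U (S \ U) S)).comp
      ((TensorProduct.map (f U) (g (S \ U))).comp (deltaInto k S U (S \ U)))

/-- The characteristic map `1_∅`: the identity on `ℬ_∅` and `0` on `ℬ_S` for
`S ≠ ∅`. -/
def gone : GEnd k := fun S => if S = ∅ then LinearMap.id else 0

/-- `1_C(S)`: the sum of all `1_w`, `w` an ordered partition of `S` of
type `C`. -/
def oneC (C : List ℕ) (S : Finset ℕ) : TD k :=
  ∑ᶠ w : PackedSeq,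
    if unionOf w.1 = S ∧ w.1.map Finset.card = C then Finsupp.single w (1 : k) else 0

/-- The composition obtained by reading a matrix of nonnegative integers row by
row and deleting all zero entries. -/
def matComp {r c : ℕ} (a : Fin r → Fin c → ℕ) : List ℕ :=
  (List.finRange r).flatMap fun i =>
    ((List.finRange c).map fun j => a i j).filter fun m => m ≠ 0

/-- `σ` is a permutation of `[n] = {1,…,n}`: it fixes everything outside
`{1,…,n}` (and hence permutes `{1,…,n}`). -/
def IsPermOn (n : ℕ) (σ : Equiv.Perm ℕ) : Prop := ∀ m ∉ Finset.Icc 1 n, σ m = m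

/-- The sequence `({σ(1)},…,{σ(n)})` of singletons, written `1_σ` in `𝒯`. -/
def permList (n : ℕ) (σ : Equiv.Perm ℕ) : PSeq :=
  (List.range n).map fun i => {σ (i + 1)}

/-- An ordered partition `(S_1,…,S_k)` is increasing if `s < s'` whenever
`s ∈ S_i`, `s' ∈ S_j` and `i < j`. -/
def Increasing (w : PSeq) : Prop := w.Pairwise fun S T => ∀ s ∈ S, ∀ t ∈ T, s < t

/-- `σ` is a shuffle of `(S_1,…,S_k)`: the elements of each `S_i` occur in
increasing order in the sequence `(σ(1),…,σ(n))`. -/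
def IsShuffle (n : ℕ) (w : PSeq) (σ : Equiv.Perm ℕ) : Prop :=
  ∀ S ∈ w, ∀ i j : ℕ, 1 ≤ i → i < j → j ≤ n → σ i ∈ S → σ j ∈ S → σ i < σ j

/-- The descent set `D(τ) = {i | 1 ≤ i ≤ n-1, τ(i) > τ(i+1)}` of a permutation
of `[n]`. -/
def Des (n : ℕ) (τ : Equiv.Perm ℕ) : Set ℕ := {i | 1 ≤ i ∧ i < n ∧ τ (i + 1) < τ i}

/-- The right action of a permutation `σ`:
`1_{(S_1,…,S_k)}·σ = 1_{(σ⁻¹(S_1),…,σ⁻¹(S_k))}`, extended linearly. -/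
def actL (σ : Equiv.Perm ℕ) : TD k →ₗ[k] TD k :=
  Finsupp.lsum k fun w =>
    LinearMap.toSpanSingleton k _ (mk k (w.1.map fun S => S.image ⇑σ⁻¹))

-- basic lemmas
lemma unionOf_nil : unionOf [] = ∅ := rfl
lemma unionOf_cons (S : Finset ℕ) (l : PSeq) : unionOf (S :: l) = S ∪ unionOf l := rfl

lemma strip_nil : strip [] = [] := rfl
lemma strip_cons (T : Finset ℕ) (l : PSeq) :
    strip (T :: l) = if T = ∅ then strip l else T :: strip l := by
  simp only [strip, List.filter_cons]
  by_cases h : T = ∅ <;> simp [h]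

lemma mem_strip {T : Finset ℕ} {l : PSeq} : T ∈ strip l ↔ T ∈ l ∧ T ≠ ∅ := by
  simp [strip]

lemma refines_def (w v : PSeq) :
    refines w v = w.flatMap fun S => strip (v.map fun U => S ∩ U) := rfl

lemma refines_nil (v : PSeq) : refines [] v = [] := rfl
lemma refines_cons (S : Finset ℕ) (w v : PSeq) :
    refines (S :: w) v = strip (v.map fun U => S ∩ U) ++ refines w v := rfl

lemma unionOf_append (l l' : PSeq) : unionOf (l ++ l') = unionOf l ∪ unionOf l' := by
  induction l with
  | nil => simp [unionOf]
  | cons S l ih => simp [unionOf_cons, ih, Finset.union_assoc]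

lemma subset_unionOf {S : Finset ℕ} {l : PSeq} (h : S ∈ l) : S ⊆ unionOf l := by
  induction l with
  | nil => cases h
  | cons T l ih =>
    rcases List.mem_cons.1 h with rfl | h
    · exact Finset.subset_union_left
    · exact (ih h).trans Finset.subset_union_right

lemma unionOf_inner (S : Finset ℕ) (v : PSeq) :
    unionOf (strip (v.map fun U => S ∩ U)) = S ∩ unionOf v := by
  induction v with
  | nil => simp [unionOf, strip]
  | cons T v ih =>
    rw [List.map_cons, strip_cons]
    by_cases h : S ∩ T = ∅ <;>
      simp [h, unionOf_cons, ih, Finset.inter_union_distrib_left]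

lemma unionOf_refines (w v : PSeq) : unionOf (refines w v) = unionOf w ∩ unionOf v := by
  induction w with
  | nil => simp [refines_nil, unionOf]
  | cons S w ih =>
    rw [refines_cons, unionOf_append, unionOf_inner, ih, unionOf_cons,
      Finset.union_inter_distrib_right]


lemma mem_inner {x S : Finset ℕ} {v : PSeq} (hx : x ∈ strip (v.map fun U => S ∩ U)) :
    x ⊆ S ∧ x ≠ ∅ := by
  rcases mem_strip.1 hx with ⟨hm, hne⟩
  rcases List.mem_map.1 hm with ⟨U, _, rfl⟩
  exact ⟨Finset.inter_subset_left, hne⟩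

lemma packed_refines {w v : PSeq} (hw : Packed w) (hv : Packed v) :
    Packed (refines w v) := by
  constructor
  · rw [refines_def, List.pairwise_flatMap]
    constructor
    · intro S _
      exact ((hv.1.map _ (fun a b h => h.mono Finset.inter_subset_right
        Finset.inter_subset_right)).filter _)
    · refine hw.1.imp_of_mem fun {S T} hS hT hd => ?_
      intro x hx y hy
      exact hd.mono (mem_inner hx).1 (mem_inner hy).1
  · intro S hS
    rcases List.mem_flatMap.1 hS with ⟨T, _, hT⟩
    exact (mem_inner hT).2

lemma strip_map_strip (S : Finset ℕ) (l : PSeq) :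
    strip ((strip l).map fun U => S ∩ U) = strip (l.map fun U => S ∩ U) := by
  induction l with
  | nil => rfl
  | cons T l ih =>
    rw [strip_cons]
    by_cases h : T = ∅
    · simp [h, strip_cons, ih]
    · rw [if_neg h, List.map_cons, List.map_cons, strip_cons, strip_cons, ih]

lemma strip_map_empty (u : PSeq) : strip (u.map fun U => (∅ : Finset ℕ) ∩ U) = [] := by
  induction u with
  | nil => rfl
  | cons _ _ ihu => rw [List.map_cons, strip_cons, if_pos (by simp), ihu]

lemma refines_single (S : Finset ℕ) (v u : PSeq) :
    strip ((refines v u).map fun U => S ∩ U)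
      = refines (strip (v.map fun U => S ∩ U)) u := by
  induction v with
  | nil => rfl
  | cons T v ih =>
    have strip_append : ∀ a b : PSeq, strip (a ++ b) = strip a ++ strip b :=
      fun a b => List.filter_append ..
    rw [refines_cons, List.map_cons, strip_cons, List.map_append, strip_append]
    have key : strip ((strip (u.map fun U => T ∩ U)).map fun U => S ∩ U)
        = strip (u.map fun U => (S ∩ T) ∩ U) := by
      rw [strip_map_strip, List.map_map]
      congr 1
      ext U
      simp [Function.comp, Finset.inter_assoc]
    by_cases h : S ∩ T = ∅
    · rw [if_pos h, ih, key, h, strip_map_empty, List.nil_append]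
    · rw [if_neg h, refines_cons, ih, key]

lemma refines_append (a b u : PSeq) :
    refines (a ++ b) u = refines a u ++ refines b u := by
  simp [refines_def]

lemma refines_assoc (w v u : PSeq) :
    refines (refines w v) u = refines w (refines v u) := by
  induction w with
  | nil => rfl
  | cons S w ih =>
    rw [refines_cons, refines_cons, refines_append, ih, refines_single]

lemma mk_packed (l : PSeq) (h : Packed l) : mk k l = Finsupp.single ⟨l, h⟩ 1 :=
  dif_pos h

lemma mk_self (w : PackedSeq) : mk k w.1 = Finsupp.single w 1 := by
  rw [mk_packed k w.1 w.2]

lemma compL_single (w v : PackedSeq) :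
    compL k (Finsupp.single w 1) (Finsupp.single v 1) = compB k w.1 v.1 := by
  simp [compL, Finsupp.lsum_single, LinearMap.toSpanSingleton_apply]

lemma compB_packed (w v : PSeq) (hw : Packed w) (hv : Packed v)
    (h : unionOf w = unionOf v) :
    compB k w v = Finsupp.single (⟨refines w v, packed_refines hw hv⟩ : PackedSeq) 1 := by
  rw [compB, if_pos h, mk_packed]

lemma compL_mk (l l' : PSeq) (hl : Packed l) (hl' : Packed l') :
    compL k (mk k l) (mk k l') = compB k l l' := by
  rw [mk_packed k l hl, mk_packed k l' hl', compL_single]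

lemma compB_pos (w v : PSeq) (h : unionOf w = unionOf v) :
    compB k w v = mk k (refines w v) := if_pos h

lemma compB_neg (w v : PSeq) (h : unionOf w ≠ unionOf v) : compB k w v = 0 := if_neg h

lemma compL_assoc_mk (l₁ l₂ l₃ : PSeq) (h₁ : Packed l₁) (h₂ : Packed l₂) (h₃ : Packed l₃) :
    compL k (compL k (mk k l₁) (mk k l₂)) (mk k l₃)
      = compL k (mk k l₁) (compL k (mk k l₂) (mk k l₃)) := by
  rw [compL_mk k l₁ l₂ h₁ h₂, compL_mk k l₂ l₃ h₂ h₃]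
  by_cases h12 : unionOf l₁ = unionOf l₂
  · rw [compB_pos k l₁ l₂ h12, compL_mk k _ l₃ (packed_refines h₁ h₂) h₃]
    by_cases h23 : unionOf l₂ = unionOf l₃
    · rw [compB_pos k l₂ l₃ h23, compL_mk k l₁ _ h₁ (packed_refines h₂ h₃),
        compB_pos k _ _ (by rw [unionOf_refines, h12, Finset.inter_self, h23]),
        compB_pos k _ _ (by rw [unionOf_refines, ← h23, Finset.inter_self, h12]),
        refines_assoc]
    · rw [compB_neg k _ _ (by rw [unionOf_refines, h12, Finset.inter_self]; exact h23),
        compB_neg k l₂ l₃ h23, map_zero]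
  · rw [compB_neg k l₁ l₂ h12, map_zero, LinearMap.zero_apply]
    by_cases h23 : unionOf l₂ = unionOf l₃
    · rw [compB_pos k l₂ l₃ h23, compL_mk k l₁ _ h₁ (packed_refines h₂ h₃),
        compB_neg k _ _ (by rw [unionOf_refines, ← h23, Finset.inter_self]; exact h12)]
    · rw [compB_neg k l₂ l₃ h23, map_zero]

lemma compL_assoc_single (w v u : PackedSeq) :
    compL k (compL k (Finsupp.single w 1) (Finsupp.single v 1)) (Finsupp.single u 1)
      = compL k (Finsupp.single w 1) (compL k (Finsupp.single v 1) (Finsupp.single u 1)) := by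
  rw [← mk_self, ← mk_self k v, ← mk_self k u, compL_assoc_mk k w.1 v.1 u.1 w.2 v.2 u.2]

lemma compL_assoc (x y z : TD k) :
    compL k (compL k x y) z = compL k x (compL k y z) := by
  induction x using Finsupp.induction_linear with
  | zero => simp
  | add a b ha hb => simp only [map_add, LinearMap.add_apply, ha, hb]
  | single w c =>
    induction y using Finsupp.induction_linear with
    | zero => simp
    | add a b ha hb => simp only [map_add, LinearMap.add_apply, ha, hb]
    | single v d =>
      induction z using Finsupp.induction_linear with
      | zero => simp
      | add a b ha hb => simp only [map_add, ha, hb]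
      | single u e =>
        have hw : (Finsupp.single w c : TD k) = c • Finsupp.single w 1 := by
          rw [Finsupp.smul_single, smul_eq_mul, mul_one]
        have hv : (Finsupp.single v d : TD k) = d • Finsupp.single v 1 := by
          rw [Finsupp.smul_single, smul_eq_mul, mul_one]
        have hu : (Finsupp.single u e : TD k) = e • Finsupp.single u 1 := by
          rw [Finsupp.smul_single, smul_eq_mul, mul_one]
        rw [hw, hv, hu]
        simp only [map_smul, LinearMap.smul_apply, map_smul]
        rw [compL_assoc_single]

lemma strip_map_inter_eq (S : Finset ℕ) (l : PSeq)
    (h : ∀ T ∈ l, S ∩ T = T ∧ T ≠ ∅) : strip (l.map fun U => S ∩ U) = l := by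
  induction l with
  | nil => rfl
  | cons T l ih =>
    rw [List.map_cons, strip_cons, (h T (List.mem_cons_self)).1,
      if_neg (h T (List.mem_cons_self)).2,
      ih fun T hT => h T (List.mem_cons_of_mem _ hT)]

lemma refines_left_unit {S : Finset ℕ} {l : PSeq} (hl : Packed l)
    (hu : unionOf l = S) : refines [S] l = l := by
  rw [refines_cons, refines_nil, List.append_nil]
  exact strip_map_inter_eq S l fun T hT =>
    ⟨Finset.inter_eq_right.2 (hu ▸ subset_unionOf hT), hl.2 T hT⟩

lemma refines_right_unit_aux {S : Finset ℕ} {l : PSeq}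
    (h : ∀ T ∈ l, T ∩ S = T ∧ T ≠ ∅) : refines l [S] = l := by
  induction l with
  | nil => rfl
  | cons T l ih =>
    rw [refines_cons, List.map_cons, List.map_nil, strip_cons, strip_nil,
      (h T (List.mem_cons_self)).1, if_neg (h T (List.mem_cons_self)).2,
      ih fun T hT => h T (List.mem_cons_of_mem _ hT)]
    rfl

lemma refines_right_unit {S : Finset ℕ} {l : PSeq} (hl : Packed l)
    (hu : unionOf l = S) : refines l [S] = l :=
  refines_right_unit_aux fun T hT =>
    ⟨Finset.inter_eq_left.2 (hu ▸ subset_unionOf hT), hl.2 T hT⟩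

theorem comp_assoc_and_solomonTits' :
    (∀ x y z : TD k, compL k (compL k x y) z = compL k x (compL k y z)) ∧
    (∀ S : Finset ℕ, S.Nonempty →
      (∀ x ∈ TS k S, ∀ y ∈ TS k S, compL k x y ∈ TS k S) ∧
      (∀ x ∈ TS k S, compL k (mk k [S]) x = x ∧ compL k x (mk k [S]) = x)) := by
  refine ⟨compL_assoc k, fun S hS => ?_⟩
  have hPS : Packed [S] := ⟨List.pairwise_singleton _ _, by simpa using hS.ne_empty⟩
  have hUS : unionOf [S] = S := by
    rw [unionOf_cons, unionOf_nil, Finset.union_empty]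
  constructor
  · intro x hx y hy
    refine Submodule.span_induction₂
      (p := fun x y _ _ => compL k x y ∈ TS k S) ?_ ?_ ?_ ?_ ?_ ?_ ?_ hx hy
    · rintro x y ⟨w, hw, rfl⟩ ⟨v, hv, rfl⟩
      rw [compL_single, compB_pos k _ _ (hw.trans hv.symm),
        mk_packed k _ (packed_refines w.2 v.2)]
      exact Submodule.subset_span ⟨⟨_, packed_refines w.2 v.2⟩,
        by rw [unionOf_refines, hw, hv, Finset.inter_self], rfl⟩
    · intro y _; rw [map_zero, LinearMap.zero_apply]; exact Submodule.zero_mem _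
    · intro x _; rw [map_zero]; exact Submodule.zero_mem _
    · intro x y z _ _ _ h1 h2
      rw [map_add, LinearMap.add_apply]; exact Submodule.add_mem _ h1 h2
    · intro x y z _ _ _ h1 h2
      rw [map_add]; exact Submodule.add_mem _ h1 h2
    · intro r x y _ _ h
      rw [map_smul, LinearMap.smul_apply]; exact Submodule.smul_mem _ _ h
    · intro r x y _ _ h
      rw [map_smul]; exact Submodule.smul_mem _ _ h
  · intro x hx
    constructor
    · refine Submodule.span_induction
        (p := fun x _ => compL k (mk k [S]) x = x) ?_ ?_ ?_ ?_ hx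
      · rintro x ⟨w, hw, rfl⟩
        rw [← mk_self, compL_mk k [S] w.1 hPS w.2,
          compB_pos k _ _ (by rw [hUS, hw]), refines_left_unit w.2 hw]
      · show compL k (mk k [S]) 0 = 0; rw [map_zero]
      · intro a b _ _ h1 h2; rw [map_add, h1, h2]
      · intro r a _ h; rw [map_smul, h]
    · refine Submodule.span_induction
        (p := fun x _ => compL k x (mk k [S]) = x) ?_ ?_ ?_ ?_ hx
      · rintro x ⟨w, hw, rfl⟩
        rw [← mk_self, compL_mk k w.1 [S] w.2 hPS,
          compB_pos k _ _ (by rw [hUS, hw]), refines_right_unit w.2 hw]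
      · show compL k 0 (mk k [S]) = 0; rw [map_zero, LinearMap.zero_apply]
      · intro a b _ _ h1 h2; rw [map_add, LinearMap.add_apply, h1, h2]
      · intro r a _ h; rw [map_smul, LinearMap.smul_apply, h]


/-- The composition product `∘` on `𝒯` is associative;
for every nonempty finite `S ⊆ ℕ` the submodule `𝒯_S` spanned by the `1_w`,
`w` an ordered partition of `S`, is closed under `∘`, and `(𝒯_S, ∘)` is an
associative unital `k`-algebra with unit `1_{(S)}` (the Solomon-Tits algebra
of `S`). -/
theorem comp_assoc_and_solomonTits (k : Type) [CommRing k] :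
    (∀ x y z : TD k, compL k (compL k x y) z = compL k x (compL k y z)) ∧
    (∀ S : Finset ℕ, S.Nonempty →
      (∀ x ∈ TS k S, ∀ y ∈ TS k S, compL k x y ∈ TS k S) ∧
      (∀ x ∈ TS k S, compL k (mk k [S]) x = x ∧ compL k x (mk k [S]) = x)) :=
  comp_assoc_and_solomonTits' k

end TwistedDescent
end
end

section
/- The endomorphisms T_w of ℬ, where w ranges over all packed sequences, are linearly independent over k; in particular, the k-linear map from the free twisted descent algebra 𝒯 to End(ℬ) sending the basis element indexed by w to T_w is injective. -/
/-!
Twisted descent algebras and the Solomon-Tits algebra (Patras-Schocker).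

* A *packed sequence* is a finite sequence of pairwise disjoint nonempty
  finite subsets of ℕ.
* `TD k` is the free twisted descent algebra `𝒯`: the free `k`-module with
  basis `1_w`, `w` a packed sequence.
* `convL` is the convolution product `∗`, `compL` the composition product `∘`,
  `deltaL` the coproduct `δ`.
* `TD k` also realizes the free twisted bialgebra `ℬ` (whose basis words
  `α_{S_1}⋯α_{S_k}` are exactly the packed sequences); `Tmap u` realizes the
  convolution `1_{U_1} ∗ ⋯ ∗ 1_{U_l}` of characteristic maps as an
  endomorphism of `ℬ`; `BS k S` is the graded piece `ℬ_S` with concatenation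
  `mulInto` and deconcatenation `deltaInto`.
-/

open scoped TensorProduct

noncomputable section
namespace TwistedDescent

variable (k : Type) [CommRing k]

/-! ### Auxiliary lemmas for linear independence of the `Tmap`s -/

lemma mem_unionOf {x : ℕ} {w : PSeq} : x ∈ unionOf w ↔ ∃ S ∈ w, x ∈ S := by
  induction w with
  | nil => simp [unionOf]
  | cons S t ih =>
      have hcons : unionOf (S :: t) = S ∪ unionOf t := rfl
      rw [hcons, Finset.mem_union, ih]
      constructor
      · rintro (h | ⟨T, hT, hx⟩)
        · exact ⟨S, List.mem_cons_self, h⟩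
        · exact ⟨T, List.mem_cons_of_mem _ hT, hx⟩
      · rintro ⟨T, hT, hx⟩
        rcases List.mem_cons.mp hT with rfl | hT'
        · exact Or.inl hx
        · exact Or.inr ⟨T, hT', hx⟩

lemma eq_of_not_disjoint {w : PSeq} (hw : w.Pairwise (fun S T => Disjoint S T))
    {U V : Finset ℕ} (hU : U ∈ w) (hV : V ∈ w) (h : ¬ Disjoint U V) : U = V := by
  by_contra hne
  exact h (haveI : Std.Symm (fun S T : Finset ℕ => Disjoint S T) := ⟨fun _ _ hST => hST.symm⟩
    List.Pairwise.forall hw hU hV hne)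

lemma sum_len_le {la : List ℕ} (h : ∀ n ∈ la, 1 ≤ n) : la.length ≤ la.sum := by
  induction la with
  | nil => simp
  | cons n t ih =>
      have h1 : 1 ≤ n := h n (List.mem_cons_self)
      have h2 := ih fun m hm => h m (List.mem_cons_of_mem _ hm)
      simp only [List.length_cons, List.sum_cons]
      omega

lemma all_one {la : List ℕ} (h : ∀ n ∈ la, 1 ≤ n) (hs : la.sum ≤ la.length) :
    ∀ n ∈ la, n = 1 := by
  induction la with
  | nil => simp
  | cons n t ih =>
      have h1 : 1 ≤ n := h n (List.mem_cons_self)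
      have h2 : ∀ m ∈ t, 1 ≤ m := fun m hm => h m (List.mem_cons_of_mem _ hm)
      have h3 : t.length ≤ t.sum := sum_len_le h2
      simp only [List.length_cons, List.sum_cons] at hs
      intro m hm
      rcases List.mem_cons.mp hm with rfl | hm'
      · omega
      · exact ih h2 (by omega) m hm'

/-- Every block of `a` contains a block of `w`, under the covering hypotheses. -/
lemma exists_block_subset {a w : PSeq} (ha : Packed a) (hw : Packed w)
    (hU : unionOf w = unionOf a) (hcov : ∀ S ∈ w, ∃ U ∈ a, S ⊆ U)
    {U : Finset ℕ} (hUa : U ∈ a) : ∃ S ∈ w, S ⊆ U ∧ S ≠ ∅ := by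
  obtain ⟨x, hx⟩ := Finset.nonempty_iff_ne_empty.mpr (ha.2 U hUa)
  have hxa : x ∈ unionOf a := mem_unionOf.mpr ⟨U, hUa, hx⟩
  rw [← hU] at hxa
  obtain ⟨S, hSw, hxS⟩ := mem_unionOf.mp hxa
  obtain ⟨U', hU'a, hSU'⟩ := hcov S hSw
  have : U' = U := eq_of_not_disjoint ha.1 hU'a hUa
    (Finset.not_disjoint_iff.mpr ⟨x, hSU' hxS, hx⟩)
  exact ⟨S, hSw, this ▸ hSU', hw.2 S hSw⟩

/-- Key triangularity lemma: if `T_a` does not kill the word `w` and maps it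
to (a multiple of) `w` itself, and `a` is at least as long as `w`, then
`a = w`. -/
lemma key {a w : PSeq} (ha : Packed a) (hw : Packed w)
    (hU : unionOf w = unionOf a) (hcov : ∀ S ∈ w, ∃ U ∈ a, S ⊆ U)
    (hre : reorder a w = w) (hlen : w.length ≤ a.length) : a = w := by
  set g : Finset ℕ → PSeq := fun U => w.filter fun S => S ⊆ U with hg
  have hlenw : (List.map (List.length ∘ g) a).sum = w.length := by
    rw [show List.length ∘ g = fun U => (g U).length from rfl, ← List.length_flatMap]
    exact congrArg List.length hre
  have hone : ∀ n ∈ List.map (List.length ∘ g) a, 1 ≤ n := by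
    intro n hn
    obtain ⟨U, hUa, rfl⟩ := List.mem_map.mp hn
    obtain ⟨S, hSw, hSU, -⟩ := exists_block_subset ha hw hU hcov hUa
    have : S ∈ g U := List.mem_filter.mpr ⟨hSw, by simpa using hSU⟩
    exact List.length_pos_iff.mpr (List.ne_nil_of_mem this)
  have hall1 : ∀ U ∈ a, (g U).length = 1 := by
    intro U hUa
    exact all_one hone (by rw [hlenw]; simpa using hlen) _
      (List.mem_map.mpr ⟨U, hUa, rfl⟩)
  have hgU : ∀ U ∈ a, g U = [U] := by
    intro U hUa
    obtain ⟨S, hS⟩ := List.length_eq_one_iff.mp (hall1 U hUa)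
    have hSmem : S ∈ g U := hS ▸ List.mem_cons_self
    have hSw : S ∈ w := (List.mem_filter.mp hSmem).1
    have hSU : S ⊆ U := by simpa using (List.mem_filter.mp hSmem).2
    have hUS : U ⊆ S := by
      intro x hx
      have hxa : x ∈ unionOf a := mem_unionOf.mpr ⟨U, hUa, hx⟩
      rw [← hU] at hxa
      obtain ⟨S', hS'w, hxS'⟩ := mem_unionOf.mp hxa
      obtain ⟨U', hU'a, hS'U'⟩ := hcov S' hS'w
      have hU'U : U' = U := eq_of_not_disjoint ha.1 hU'a hUa
        (Finset.not_disjoint_iff.mpr ⟨x, hS'U' hxS', hx⟩)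
      have : S' ∈ g U := List.mem_filter.mpr ⟨hS'w, by simpa using hU'U ▸ hS'U'⟩
      rw [hS, List.mem_singleton] at this
      exact this ▸ hxS'
    rw [hS, Finset.Subset.antisymm hSU hUS]
  calc a = a.flatMap (fun U => [U]) := (List.flatMap_singleton' a).symm
    _ = a.flatMap g := by
        refine (List.flatMap_congr ?_).symm
        intro U hUa; exact hgU U hUa
    _ = w := hre

lemma filter_self {w : PSeq} (hw : Packed w) {U : Finset ℕ} (hUw : U ∈ w) :
    (w.filter fun S => S ⊆ U) = [U] := by
  induction w with
  | nil => cases hUw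
  | cons S t ih =>
      have hdisj : ∀ T ∈ t, Disjoint S T := (List.pairwise_cons.mp hw.1).1
      have htp : Packed t :=
        ⟨(List.pairwise_cons.mp hw.1).2, fun T hT => hw.2 T (List.mem_cons_of_mem _ hT)⟩
      rcases List.mem_cons.mp hUw with rfl | hUt
      · have : (t.filter fun S => S ⊆ U) = [] := by
          rw [List.filter_eq_nil_iff]
          intro T hT hTU
          have hTU' : T ⊆ U := by simpa using hTU
          have : T = ∅ := Finset.bot_eq_empty ▸
            disjoint_self.mp ((hdisj T hT).symm.mono_right hTU')
          exact htp.2 T hT this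
        simp [List.filter_cons, this]
      · have hSU : ¬ (S ⊆ U) := by
          intro hsub
          have : S = ∅ := Finset.bot_eq_empty ▸
            disjoint_self.mp ((hdisj U hUt).mono_right hsub)
          exact hw.2 S (List.mem_cons_self) this
        simp [List.filter_cons, hSU, ih htp hUt]

lemma reorder_self {w : PSeq} (hw : Packed w) : reorder w w = w := by
  unfold reorder
  calc w.flatMap (fun U => w.filter fun S => S ⊆ U)
      = w.flatMap (fun U => [U]) := by
        refine List.flatMap_congr ?_
        intro U hUw
        exact filter_self hw hUw
    _ = w := List.flatMap_singleton' w

lemma TmapB_diag (w : PackedSeq) : (TmapB k w.1 w) w = 1 := by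
  rw [TmapB, if_pos ⟨rfl, fun S hS => ⟨S, hS, le_refl S⟩⟩, reorder_self w.2, mk,
    dif_pos w.2]
  simp

lemma TmapB_coeff_ne_zero {a : PSeq} {w : PackedSeq} (h : (TmapB k a w) w ≠ 0) :
    unionOf w.1 = unionOf a ∧ (∀ S ∈ w.1, ∃ U ∈ a, S ⊆ U) ∧
      reorder a w.1 = w.1 := by
  rw [TmapB] at h
  split_ifs at h with hc
  swap
  · simp at h
  refine ⟨hc.1, hc.2, ?_⟩
  rw [mk] at h
  split_ifs at h with hp
  swap
  · simp at h
  rw [Finsupp.single_apply] at h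
  split_ifs at h with he
  · exact congrArg Subtype.val he
  · simp at h

/-- Over a field `k`, the endomorphisms `T_w` of `ℬ`, `w`
ranging over all packed sequences, are linearly independent; in particular the
linear map `𝒯 → End(ℬ)` sending the basis element indexed by `w` to `T_w` is
injective. -/
theorem Tmap_linearIndependent (k : Type) [Field k] :
    LinearIndependent k (fun w : PackedSeq => Tmap k w.1) ∧
    Function.Injective
      (Finsupp.linearCombination k (fun w : PackedSeq => Tmap k w.1)) := by
  have hker : ∀ l : PackedSeq →₀ k,
      Finsupp.linearCombination k (fun w : PackedSeq => Tmap k w.1) l = 0 →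
        l = 0 := by
    intro l hl
    by_contra hne
    obtain ⟨u₀, hu₀, hmin⟩ := l.support.exists_min_image (fun u => u.1.length)
      (Finsupp.support_nonempty_iff.mpr hne)
    have h1 : (Finsupp.linearCombination k (fun w : PackedSeq => Tmap k w.1) l)
        (Finsupp.single u₀ (1 : k)) = 0 := by rw [hl]; rfl
    rw [Finsupp.linearCombination_apply, Finsupp.sum, LinearMap.coe_sum,
      Finset.sum_apply] at h1
    have h2 : ∀ u ∈ l.support,
        (l u • Tmap k u.1) (Finsupp.single u₀ (1 : k)) =
          l u • TmapB k u.1 u₀ := by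
      intro u _
      rw [LinearMap.smul_apply, Tmap, Finsupp.lsum_single,
        LinearMap.toSpanSingleton_apply, one_smul]
    rw [Finset.sum_congr rfl h2] at h1
    have h3 : ∑ u ∈ l.support, l u * (TmapB k u.1 u₀) u₀ = 0 := by
      have := congrArg (fun f : TD k => f u₀) h1
      simpa [Finsupp.finset_sum_apply, Finsupp.smul_apply] using this
    have h4 : ∀ u ∈ l.support, u ≠ u₀ → l u * (TmapB k u.1 u₀) u₀ = 0 := by
      intro u hu hneu
      by_contra hz
      have hcoeff : (TmapB k u.1 u₀) u₀ ≠ 0 := fun h0 => hz (by rw [h0, mul_zero])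
      obtain ⟨hUe, hcov, hre⟩ := TmapB_coeff_ne_zero k hcoeff
      have := key u.2 u₀.2 hUe hcov hre (hmin u hu)
      exact hneu (Subtype.ext this)
    rw [Finset.sum_eq_single_of_mem u₀ hu₀ h4, TmapB_diag, mul_one] at h3
    exact (Finsupp.mem_support_iff.mp hu₀) h3
  have hinj : Function.Injective
      (Finsupp.linearCombination k (fun w : PackedSeq => Tmap k w.1)) := by
    intro l1 l2 h12
    have h0 : Finsupp.linearCombination k (fun w : PackedSeq => Tmap k w.1)
        (l1 - l2) = 0 := by rw [map_sub, h12, sub_self]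
    exact sub_eq_zero.mp (hker _ h0)
  exact ⟨hinj, hinj⟩

end TwistedDescent
end
end

section
/- The coproduct δ on 𝒯 is coassociative and cocommutative: (δ ⊗ id) ∘ δ = (id ⊗ δ) ∘ δ, and τ ∘ δ = δ, where τ : 𝒯 ⊗_k 𝒯 → 𝒯 ⊗_k 𝒯 is the flip a⊗b ↦ b⊗a. -/
/-!
Twisted descent algebras and the Solomon-Tits algebra (Patras-Schocker).

* A *packed sequence* is a finite sequence of pairwise disjoint nonempty
  finite subsets of ℕ.
* `TD k` is the free twisted descent algebra `𝒯`: the free `k`-module with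
  basis `1_w`, `w` a packed sequence.
* `convL` is the convolution product `∗`, `compL` the composition product `∘`,
  `deltaL` the coproduct `δ`.
* `TD k` also realizes the free twisted bialgebra `ℬ` (whose basis words
  `α_{S_1}⋯α_{S_k}` are exactly the packed sequences); `Tmap u` realizes the
  convolution `1_{U_1} ∗ ⋯ ∗ 1_{U_l}` of characteristic maps as an
  endomorphism of `ℬ`; `BS k S` is the graded piece `ℬ_S` with concatenation
  `mulInto` and deconcatenation `deltaInto`.
-/

open scoped TensorProduct

noncomputable section
namespace TwistedDescent

variable (k : Type) [CommRing k]

/-! ### Auxiliary lemmas for Statement 7 -/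

section Aux

variable {M : Type*} [AddCommMonoid M]

/-- Sum of a function over all splittings of a sequence. -/
def ssum (l : PSeq) (f : List (Finset ℕ × Finset ℕ) → M) : M :=
  ((splittings l).map f).sum

lemma ssum_nil (f : List (Finset ℕ × Finset ℕ) → M) : ssum [] f = f [] := by
  simp [ssum, splittings]

lemma list_sum_flatMap {α : Type*} (l : List α) (g : α → List M) :
    (l.flatMap g).sum = (l.map fun a => (g a).sum).sum := by
  induction l with
  | nil => simp
  | cons a l ih => simp [ih]

lemma list_sum_finset_sum {α β : Type*} (l : List α) (s : Finset β) (g : β → α → M) :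
    (l.map fun a => ∑ b ∈ s, g b a).sum = ∑ b ∈ s, (l.map fun a => g b a).sum := by
  induction l with
  | nil => simp
  | cons a l ih => simp [ih, Finset.sum_add_distrib]

lemma ssum_cons (S : Finset ℕ) (tl : PSeq) (f : List (Finset ℕ × Finset ℕ) → M) :
    ssum (S :: tl) f = ∑ T ∈ S.powerset, ssum tl (fun s => f ((T, S \ T) :: s)) := by
  unfold ssum splittings
  rw [List.map_cons, List.sections, List.map_flatMap, list_sum_flatMap]
  simp only [List.map_map]
  rw [← list_sum_finset_sum]
  congr 1
  apply List.map_congr_left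
  intro s _
  rw [← Finset.sum_map_toList]
  congr 1

lemma ssum_congr {l : PSeq} {f g : List (Finset ℕ × Finset ℕ) → M}
    (h : ∀ p ∈ splittings l, f p = g p) : ssum l f = ssum l g := by
  unfold ssum; rw [List.map_congr_left h]

lemma ssum_finset_sum {β : Type*} (l : PSeq) (s : Finset β)
    (g : β → List (Finset ℕ × Finset ℕ) → M) :
    ssum l (fun p => ∑ b ∈ s, g b p) = ∑ b ∈ s, ssum l (g b) := by
  unfold ssum; exact list_sum_finset_sum _ _ _

lemma map_ssum {k : Type} [CommRing k] {M N : Type*} [AddCommMonoid M] [Module k M]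
    [AddCommMonoid N] [Module k N] (φ : M →ₗ[k] N) (l : PSeq)
    (f : List (Finset ℕ × Finset ℕ) → M) :
    φ (ssum l f) = ssum l (fun p => φ (f p)) := by
  unfold ssum
  rw [map_list_sum, List.map_map]
  rfl

lemma strip_idem (l : PSeq) : strip (strip l) = strip l := by
  simp [strip, List.filter_filter]

lemma strip_cons_strip (T : Finset ℕ) (l : PSeq) :
    strip (T :: strip l) = strip (T :: l) := by
  by_cases h : T = ∅ <;> simp [strip, List.filter_cons, h, List.filter_filter]

lemma ssum_strip (l : PSeq) (G : PSeq → PSeq → M) :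
    ssum (strip l) (fun p => G (strip (p.map Prod.fst)) (strip (p.map Prod.snd)))
      = ssum l (fun p => G (strip (p.map Prod.fst)) (strip (p.map Prod.snd))) := by
  induction l generalizing G with
  | nil => rfl
  | cons S tl ih =>
    by_cases h : S = ∅
    · subst h
      rw [show strip ((∅ : Finset ℕ) :: tl) = strip tl from by simp [strip]]
      rw [ssum_cons]
      rw [show (∅ : Finset ℕ).powerset = {∅} from Finset.powerset_empty]
      rw [Finset.sum_singleton]
      rw [ih G]
      apply ssum_congr
      intro p _
      simp [strip, List.filter_cons]
    · rw [show strip (S :: tl) = S :: strip tl from by simp [strip, List.filter_cons, h]]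
      rw [ssum_cons, ssum_cons]
      refine Finset.sum_congr rfl fun T _ => ?_
      have key : ∀ (m : PSeq) (p : List (Finset ℕ × Finset ℕ)),
          G (strip (((T, S \ T) :: p).map Prod.fst)) (strip (((T, S \ T) :: p).map Prod.snd))
          = (fun x y => G (strip (T :: x)) (strip ((S \ T) :: y)))
              (strip (p.map Prod.fst)) (strip (p.map Prod.snd)) := by
        intro m p
        simp only [List.map_cons]
        rw [strip_cons_strip, strip_cons_strip]
      calc ssum (strip tl) (fun p => G (strip (((T, S \ T) :: p).map Prod.fst))
              (strip (((T, S \ T) :: p).map Prod.snd)))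
          = ssum (strip tl) (fun p => (fun x y => G (strip (T :: x)) (strip ((S \ T) :: y)))
              (strip (p.map Prod.fst)) (strip (p.map Prod.snd))) :=
            ssum_congr fun p _ => key tl p
        _ = ssum tl (fun p => (fun x y => G (strip (T :: x)) (strip ((S \ T) :: y)))
              (strip (p.map Prod.fst)) (strip (p.map Prod.snd))) :=
            ih (fun x y => G (strip (T :: x)) (strip ((S \ T) :: y)))
        _ = ssum tl (fun p => G (strip (((T, S \ T) :: p).map Prod.fst))
              (strip (((T, S \ T) :: p).map Prod.snd))) :=
            (ssum_congr fun p _ => (key tl p).symm)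

lemma sdiff_sdiff_eq {S T A : Finset ℕ} (hA : A ⊆ T) (hT : T ⊆ S) :
    (S \ A) \ (T \ A) = S \ T := by
  ext x
  simp only [Finset.mem_sdiff]
  constructor
  · rintro ⟨⟨hs, ha⟩, h⟩
    exact ⟨hs, fun ht => h ⟨ht, ha⟩⟩
  · rintro ⟨hs, ht⟩
    exact ⟨⟨hs, fun ha => ht (hA ha)⟩, fun ⟨ht', _⟩ => ht ht'⟩

lemma powerset_key (S : Finset ℕ) (g : Finset ℕ → Finset ℕ → Finset ℕ → M) :
    ∑ T ∈ S.powerset, ∑ A ∈ T.powerset, g A (T \ A) (S \ T)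
      = ∑ A ∈ S.powerset, ∑ B ∈ (S \ A).powerset, g A B ((S \ A) \ B) := by
  rw [Finset.sum_sigma', Finset.sum_sigma']
  refine Finset.sum_nbij' (i := fun x => ⟨x.2, x.1 \ x.2⟩) (j := fun x => ⟨x.1 ∪ x.2, x.1⟩)
    ?_ ?_ ?_ ?_ ?_
  · rintro ⟨T, A⟩ hx
    simp only [Finset.mem_sigma, Finset.mem_powerset] at hx ⊢
    exact ⟨hx.2.trans hx.1, Finset.sdiff_subset_sdiff hx.1 (le_refl _)⟩
  · rintro ⟨A, B⟩ hx
    simp only [Finset.mem_sigma, Finset.mem_powerset] at hx ⊢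
    refine ⟨Finset.union_subset hx.1 (hx.2.trans (Finset.sdiff_subset)), Finset.subset_union_left⟩
  · rintro ⟨T, A⟩ hx
    simp only [Finset.mem_sigma, Finset.mem_powerset] at hx
    simp [Finset.union_sdiff_of_subset hx.2]
  · rintro ⟨A, B⟩ hx
    simp only [Finset.mem_sigma, Finset.mem_powerset] at hx
    have hd : Disjoint A B := Finset.disjoint_sdiff.mono_right hx.2
    simp [Finset.union_sdiff_cancel_left hd]
  · rintro ⟨T, A⟩ hx
    simp only [Finset.mem_sigma, Finset.mem_powerset] at hx
    simp only
    rw [sdiff_sdiff_eq hx.2 hx.1]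

lemma coassoc_key (w : PSeq) (f : PSeq → PSeq → PSeq → M) :
    ssum w (fun p => ssum (p.map Prod.fst)
        (fun q => f (q.map Prod.fst) (q.map Prod.snd) (p.map Prod.snd)))
      = ssum w (fun p => ssum (p.map Prod.snd)
        (fun q => f (p.map Prod.fst) (q.map Prod.fst) (q.map Prod.snd))) := by
  induction w generalizing f with
  | nil => simp only [ssum_nil, List.map_nil]
  | cons S tl ih =>
    rw [ssum_cons, ssum_cons]
    have lhs : ∀ T ∈ S.powerset,
        ssum tl (fun s => ssum (((T, S \ T) :: s).map Prod.fst)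
          (fun q => f (q.map Prod.fst) (q.map Prod.snd) (((T, S \ T) :: s).map Prod.snd)))
        = ∑ A ∈ T.powerset, ssum tl (fun s => ssum (s.map Prod.snd)
            (fun q => f (A :: s.map Prod.fst) ((T \ A) :: q.map Prod.fst)
              ((S \ T) :: q.map Prod.snd))) := by
      intro T _
      have : ∀ s, ssum (((T, S \ T) :: s).map Prod.fst)
          (fun q => f (q.map Prod.fst) (q.map Prod.snd) (((T, S \ T) :: s).map Prod.snd))
          = ∑ A ∈ T.powerset, ssum (s.map Prod.fst)
              (fun q => f (A :: q.map Prod.fst) ((T \ A) :: q.map Prod.snd)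
                ((S \ T) :: s.map Prod.snd)) := by
        intro s
        rw [List.map_cons, ssum_cons]
        rfl
      rw [ssum_congr fun s _ => this s, ssum_finset_sum]
      refine Finset.sum_congr rfl fun A _ => ?_
      exact ih (fun x y z => f (A :: x) ((T \ A) :: y) ((S \ T) :: z))
    have rhs : ∀ T ∈ S.powerset,
        ssum tl (fun s => ssum (((T, S \ T) :: s).map Prod.snd)
          (fun q => f (((T, S \ T) :: s).map Prod.fst) (q.map Prod.fst) (q.map Prod.snd)))
        = ∑ B ∈ (S \ T).powerset, ssum tl (fun s => ssum (s.map Prod.snd)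
            (fun q => f (T :: s.map Prod.fst) (B :: q.map Prod.fst)
              (((S \ T) \ B) :: q.map Prod.snd))) := by
      intro T _
      have : ∀ s, ssum (((T, S \ T) :: s).map Prod.snd)
          (fun q => f (((T, S \ T) :: s).map Prod.fst) (q.map Prod.fst) (q.map Prod.snd))
          = ∑ B ∈ (S \ T).powerset, ssum (s.map Prod.snd)
              (fun q => f (T :: s.map Prod.fst) (B :: q.map Prod.fst)
                (((S \ T) \ B) :: q.map Prod.snd)) := by
        intro s
        rw [List.map_cons, ssum_cons]
        rfl
      rw [ssum_congr fun s _ => this s, ssum_finset_sum]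
    rw [Finset.sum_congr rfl lhs, Finset.sum_congr rfl rhs]
    exact powerset_key S (fun a b c => ssum tl (fun s => ssum (s.map Prod.snd)
      (fun q => f (a :: s.map Prod.fst) (b :: q.map Prod.fst) (c :: q.map Prod.snd))))

lemma swap_key (l : PSeq) (f : PSeq → PSeq → M) :
    ssum l (fun p => f (p.map Prod.fst) (p.map Prod.snd))
      = ssum l (fun p => f (p.map Prod.snd) (p.map Prod.fst)) := by
  induction l generalizing f with
  | nil => simp only [ssum_nil, List.map_nil]
  | cons S tl ih =>
    rw [ssum_cons, ssum_cons]
    refine Finset.sum_nbij' (i := fun T => S \ T) (j := fun T => S \ T)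
      (fun T hT => by simp [Finset.mem_powerset]) (fun T hT => by simp [Finset.mem_powerset])
      (fun T hT => Finset.sdiff_sdiff_eq_self (Finset.mem_powerset.1 hT))
      (fun T hT => Finset.sdiff_sdiff_eq_self (Finset.mem_powerset.1 hT))
      (fun T hT => ?_)
    have h1 : ssum tl (fun s => f (((T, S \ T) :: s).map Prod.fst)
        (((T, S \ T) :: s).map Prod.snd))
        = ssum tl (fun s => f (T :: s.map Prod.snd) ((S \ T) :: s.map Prod.fst)) := by
      simp only [List.map_cons]
      exact ih (fun x y => f (T :: x) ((S \ T) :: y))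
    rw [h1]
    apply ssum_congr
    intro p _
    simp only [List.map_cons]
    rw [Finset.sdiff_sdiff_eq_self (Finset.mem_powerset.1 hT)]

lemma mem_of_forall₂_subset {m w : PSeq} (h : List.Forall₂ (· ⊆ ·) m w) :
    ∀ x ∈ m, ∃ y ∈ w, x ⊆ y := by
  induction h with
  | nil => simp
  | cons hab _ ih =>
    intro x hx
    rcases hx with _ | hx
    · exact ⟨_, List.mem_cons_self, hab⟩
    · obtain ⟨y, hy, hxy⟩ := ih _ (by assumption)
      exact ⟨y, List.mem_cons_of_mem _ hy, hxy⟩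

lemma pairwise_of_forall₂ {m w : PSeq} (h : List.Forall₂ (· ⊆ ·) m w)
    (hw : w.Pairwise (fun S T => Disjoint S T)) : m.Pairwise (fun S T => Disjoint S T) := by
  induction h with
  | nil => exact List.Pairwise.nil
  | cons hab h ih =>
    rcases hw with _ | ⟨hd, hw⟩
    refine List.Pairwise.cons ?_ (ih hw)
    intro x hx
    obtain ⟨y, hy, hxy⟩ := mem_of_forall₂_subset h x hx
    exact ((hd y hy).mono_left hab).mono_right hxy

lemma splittings_forall₂ {w : PSeq} {p : List (Finset ℕ × Finset ℕ)}
    (hp : p ∈ splittings w) :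
    List.Forall₂ (· ⊆ ·) (p.map Prod.fst) w ∧ List.Forall₂ (· ⊆ ·) (p.map Prod.snd) w := by
  rw [splittings, List.mem_sections, List.forall₂_map_right_iff] at hp
  have key : ∀ {a : Finset ℕ × Finset ℕ} {S : Finset ℕ},
      a ∈ (S.powerset.toList.map fun U => (U, S \ U)) → a.1 ⊆ S ∧ a.2 ⊆ S := by
    intro a S ha
    simp only [List.mem_map, Finset.mem_toList, Finset.mem_powerset] at ha
    obtain ⟨U, hU, rfl⟩ := ha
    exact ⟨hU, Finset.sdiff_subset⟩
  constructor <;> rw [List.forall₂_map_left_iff]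
  · exact hp.imp fun {a b} ha => (key ha).1
  · exact hp.imp fun {a b} ha => (key ha).2

lemma packed_strip {m : PSeq} (hm : m.Pairwise (fun S T => Disjoint S T)) :
    Packed (strip m) := by
  constructor
  · exact List.Pairwise.sublist List.filter_sublist hm
  · intro S hS
    have := List.of_mem_filter hS
    simpa using this

variable {k : Type} [CommRing k]

lemma deltaL_single (w : PackedSeq) :
    deltaL k (Finsupp.single w (1 : k)) = deltaB k w := by
  rw [deltaL, Finsupp.lsum_single, LinearMap.toSpanSingleton_apply, one_smul]

lemma deltaB_eq (w : PackedSeq) :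
    deltaB k w = ssum w.1 (fun p =>
      mk k (strip (p.map Prod.fst)) ⊗ₜ[k] mk k (strip (p.map Prod.snd))) := rfl

lemma deltaL_mk_strip (m : PSeq) (hm : m.Pairwise (fun S T => Disjoint S T)) :
    deltaL k (mk k (strip m)) = ssum m (fun p =>
      mk k (strip (p.map Prod.fst)) ⊗ₜ[k] mk k (strip (p.map Prod.snd))) := by
  have hp := packed_strip hm
  rw [show mk k (strip m) = Finsupp.single (⟨strip m, hp⟩ : PackedSeq) 1 from by
    rw [mk, dif_pos hp]]
  rw [deltaL_single, deltaB_eq]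
  exact ssum_strip m (fun x y => mk k x ⊗ₜ[k] mk k y)

end Aux

/-- The coproduct `δ` on `𝒯` is coassociative and
cocommutative: `(δ ⊗ id) ∘ δ = (id ⊗ δ) ∘ δ` (up to the associativity
isomorphism of the tensor product) and `τ ∘ δ = δ` where `τ` is the flip of
the two tensor factors. -/
theorem delta_coassoc_cocomm (k : Type) [CommRing k] :
    (TensorProduct.assoc k (TD k) (TD k) (TD k)).toLinearMap.comp
        ((TensorProduct.map (deltaL k) LinearMap.id).comp (deltaL k))
      = (TensorProduct.map LinearMap.id (deltaL k)).comp (deltaL k) ∧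
    (TensorProduct.comm k (TD k) (TD k)).toLinearMap.comp (deltaL k)
      = deltaL k := by
  constructor
  · apply Finsupp.lhom_ext
    intro w b
    have hb : (Finsupp.single w b : TD k) = b • Finsupp.single w (1 : k) := by
      rw [Finsupp.smul_single, smul_eq_mul, mul_one]
    rw [hb]
    simp only [map_smul]
    congr 1
    simp only [LinearMap.comp_apply, deltaL_single, deltaB_eq]
    rw [map_ssum, map_ssum, map_ssum]
    have lhs_eq : ∀ p ∈ splittings w.1,
        (TensorProduct.assoc k (TD k) (TD k) (TD k)).toLinearMap
          ((TensorProduct.map (deltaL k) LinearMap.id)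
            (mk k (strip (p.map Prod.fst)) ⊗ₜ[k] mk k (strip (p.map Prod.snd))))
        = ssum (p.map Prod.fst) (fun q =>
            mk k (strip (q.map Prod.fst)) ⊗ₜ[k]
              (mk k (strip (q.map Prod.snd)) ⊗ₜ[k] mk k (strip (p.map Prod.snd)))) := by
      intro p hp
      rw [TensorProduct.map_tmul, LinearMap.id_apply]
      rw [deltaL_mk_strip _ (pairwise_of_forall₂ (splittings_forall₂ hp).1 w.2.1)]
      set y := mk k (strip (p.map Prod.snd)) with hy
      have : (ssum (p.map Prod.fst) (fun q =>
          mk k (strip (q.map Prod.fst)) ⊗ₜ[k] mk k (strip (q.map Prod.snd)))) ⊗ₜ[k] y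
          = ssum (p.map Prod.fst) (fun q =>
            (mk k (strip (q.map Prod.fst)) ⊗ₜ[k] mk k (strip (q.map Prod.snd))) ⊗ₜ[k] y) :=
        map_ssum ((TensorProduct.mk k (TD k ⊗[k] TD k) (TD k)).flip y) _ _
      rw [this, map_ssum]
      apply ssum_congr
      intro q _
      exact TensorProduct.assoc_tmul _ _ _
    have rhs_eq : ∀ p ∈ splittings w.1,
        (TensorProduct.map LinearMap.id (deltaL k))
          (mk k (strip (p.map Prod.fst)) ⊗ₜ[k] mk k (strip (p.map Prod.snd)))
        = ssum (p.map Prod.snd) (fun q =>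
            mk k (strip (p.map Prod.fst)) ⊗ₜ[k]
              (mk k (strip (q.map Prod.fst)) ⊗ₜ[k] mk k (strip (q.map Prod.snd)))) := by
      intro p hp
      rw [TensorProduct.map_tmul, LinearMap.id_apply]
      rw [deltaL_mk_strip _ (pairwise_of_forall₂ (splittings_forall₂ hp).2 w.2.1)]
      exact map_ssum (TensorProduct.mk k (TD k) (TD k ⊗[k] TD k) (mk k (strip (p.map Prod.fst)))) _ _
    rw [ssum_congr lhs_eq, ssum_congr rhs_eq]
    exact coassoc_key w.1 (fun x y z => mk k (strip x) ⊗ₜ[k] (mk k (strip y) ⊗ₜ[k] mk k (strip z)))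
  · apply Finsupp.lhom_ext
    intro w b
    have hb : (Finsupp.single w b : TD k) = b • Finsupp.single w (1 : k) := by
      rw [Finsupp.smul_single, smul_eq_mul, mul_one]
    rw [hb]
    simp only [map_smul]
    congr 1
    simp only [LinearMap.comp_apply, deltaL_single, deltaB_eq]
    rw [map_ssum]
    have comm_eq : ∀ p ∈ splittings w.1,
        (TensorProduct.comm k (TD k) (TD k)).toLinearMap
          (mk k (strip (p.map Prod.fst)) ⊗ₜ[k] mk k (strip (p.map Prod.snd)))
        = mk k (strip (p.map Prod.snd)) ⊗ₜ[k] mk k (strip (p.map Prod.fst)) := by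
      intro p _
      rw [LinearEquiv.coe_coe, TensorProduct.comm_tmul]
    rw [ssum_congr comm_eq]
    exact swap_key w.1 (fun x y => mk k (strip y) ⊗ₜ[k] mk k (strip x))

end TwistedDescent
end
end
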